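/- arXiv:0906.1415 — 4 statements merged into one kernel-verified Lean document; each statement's English description precedes it below -/
import Mathlib

section
/- Let X be a set, f : X → X a map, x ∈ X a periodic point with f^q(x) = x for some q ≥ 1, v : X → ℝ any function, and c ∈ ℝ with e^{iqc} ≠ 1. Then: (i) the sequence p_c(n) = ∑_{j=0}^{n−1} e^{ijc} v(f^j x) is bounded in n; (ii) for each n ≥ 1 the limit M_c(n) := lim_{N→∞} (1/N) ∑_{j=1}^{N} |p_c(j+n) − p_c(j)|² exists and equals (1/q) ∑_{j=0}^{q−1} |∑_{l=0}^{n−1} e^{ilc} v(f^{j+l} x)|²; and (iii) sup_n M_c(n) < ∞, so that limsup_{n→∞} log M_c(n) / log n ≤ 0. -/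
/-!
Along the orbit of `x` the summands `a j = e^{ijc} v(f^j x)` satisfy `a (j + q) = z * a j` with
`z = e^{iqc}`. Splitting `p (n + q)` in two ways gives `(1 - z) p n = p q - e^{inc} W`, where `W` is
a window sum of length `q` that is `q`-periodic in its starting point, hence bounded; since
`z ≠ 1` this bounds `p`. The increments `|p (j + n) - p j|` are `q`-periodic in `j`, so their
Cesàro means converge to the mean over one period, and the bound on `p` bounds `M`.
-/

open Filter Topology Finset Function Complex

namespace Function.Periodic

variable {E : Type*} {g : ℕ → E} {q : ℕ}

theorem sum_range_const_add [AddCommMonoid E] (hg : Periodic g q) (s : ℕ) :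
    ∑ j ∈ range q, g (s + j) = ∑ j ∈ range q, g j :=
  calc ∑ j ∈ range q, g (s + j) = ∑ j ∈ Ico s (s + q), g j := by
        rw [sum_Ico_eq_sum_range, Nat.add_sub_cancel_left]
    _ = ∑ j ∈ Ico s (s + q), g (j % q) := sum_congr rfl fun j _ => (hg.map_mod_nat j).symm
    _ = ∑ j ∈ range q, g j := by
        rw [← Nat.image_Ico_mod s q, sum_image (Nat.mod_injOn_Ico s q)]

theorem exists_norm_le [SeminormedAddGroup E] (hg : Periodic g q) (hq : q ≠ 0) :
    ∃ C, ∀ n, ‖g n‖ ≤ C :=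
  ⟨∑ r ∈ range q, ‖g r‖, fun n => hg.map_mod_nat n ▸
    single_le_sum (fun r _ => norm_nonneg (g r)) (mem_range.2 (Nat.mod_lt n (by omega)))⟩

theorem tendsto_average [NormedAddCommGroup E] [NormedSpace ℝ E] (hg : Periodic g q)
    (hq : q ≠ 0) :
    Tendsto (fun N : ℕ => (N : ℝ)⁻¹ • ∑ j ∈ range N, g j) atTop
      (𝓝 ((q : ℝ)⁻¹ • ∑ j ∈ range q, g j)) := by
  set m : E := (q : ℝ)⁻¹ • ∑ j ∈ range q, g j
  -- the discrepancy from the mean is itself `q`-periodic, hence bounded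
  have hS : Periodic (fun N => ∑ j ∈ range N, g j - (N : ℝ) • m) q := fun N => by
    have hqm : (q : ℝ) • m = ∑ j ∈ range q, g j := by
      simp [m, smul_smul, mul_inv_cancel₀ (Nat.cast_ne_zero.2 hq : (q : ℝ) ≠ 0)]
    simp only [sum_range_add, hg.sum_range_const_add, Nat.cast_add, add_smul, hqm]
    abel
  obtain ⟨C, hC⟩ := hS.exists_norm_le hq
  rw [← tendsto_sub_nhds_zero_iff]
  refine squeeze_zero_norm' ?_ (tendsto_const_div_atTop_nhds_zero_nat C)
  filter_upwards [eventually_ne_atTop 0] with N hN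
  have hN' : (N : ℝ) ≠ 0 := Nat.cast_ne_zero.2 hN
  calc ‖(N : ℝ)⁻¹ • ∑ j ∈ range N, g j - m‖
      = ‖(N : ℝ)⁻¹ • (∑ j ∈ range N, g j - (N : ℝ) • m)‖ := by
        rw [smul_sub, smul_smul, inv_mul_cancel₀ hN', one_smul]
    _ ≤ C / N := by
        rw [norm_smul, norm_inv, Real.norm_natCast, inv_mul_eq_div]
        gcongr
        exact hC N

theorem tendsto_average_Icc [NormedAddCommGroup E] [NormedSpace ℝ E] (hg : Periodic g q)
    (hq : q ≠ 0) :
    Tendsto (fun N : ℕ => (N : ℝ)⁻¹ • ∑ j ∈ Icc 1 N, g j) atTop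
      (𝓝 ((q : ℝ)⁻¹ • ∑ j ∈ range q, g j)) := by
  have h := (hg.const_add 1).tendsto_average hq
  simp only [hg.sum_range_const_add] at h
  refine h.congr fun N => ?_
  rw [← Finset.Ico_add_one_right_eq_Icc, sum_Ico_eq_sum_range, Nat.add_sub_cancel]

end Function.Periodic

theorem norm_cexp_I_mul_natCast_mul (n : ℕ) (c : ℝ) : ‖exp (I * n * c)‖ = 1 := by
  simpa [mul_assoc] using norm_exp_I_mul_ofReal (n * c)

theorem cexp_I_mul_natCast_add_mul (a b : ℕ) (c : ℝ) :
    exp (I * ↑(a + b) * c) = exp (I * a * c) * exp (I * b * c) := by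
  rw [← Complex.exp_add]
  push_cast
  ring_nf

/-- For `u j = v (f^[j] x)`, `twistedSum c u j n = e^{-ijc} (p_c (j + n) - p_c j)`. -/
noncomputable def twistedSum (c : ℝ) (u : ℕ → ℂ) (j n : ℕ) : ℂ :=
  ∑ l ∈ range n, exp (I * l * c) * u (j + l)

theorem twistedSum_add (c : ℝ) (u : ℕ → ℂ) (s j n : ℕ) :
    twistedSum c u s (j + n) =
      twistedSum c u s j + exp (I * j * c) * twistedSum c u (s + j) n := by
  simp only [twistedSum, sum_range_add, mul_sum, add_assoc]
  congr 1
  refine sum_congr rfl fun l _ => ?_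
  rw [cexp_I_mul_natCast_add_mul]
  ring

theorem Function.Periodic.twistedSum {u : ℕ → ℂ} {q : ℕ} (hu : Periodic u q) (c : ℝ) (n : ℕ) :
    Periodic (fun j => twistedSum c u j n) q := fun j => by
  simp only [_root_.twistedSum, add_right_comm j q, hu _]

theorem exists_norm_twistedSum_zero_le {u : ℕ → ℂ} {q : ℕ} (hu : Periodic u q) {c : ℝ}
    (hc : exp (I * q * c) ≠ 1) : ∃ B, ∀ n, ‖twistedSum c u 0 n‖ ≤ B := by
  have hq : q ≠ 0 := by rintro rfl; simp at hc
  obtain ⟨C, hC⟩ := (hu.twistedSum c q).exists_norm_le hq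
  have hz : 0 < ‖1 - exp (I * q * c)‖ := norm_pos_iff.2 (sub_ne_zero.2 hc.symm)
  refine ⟨(‖twistedSum c u 0 q‖ + C) / ‖1 - exp (I * q * c)‖, fun n => ?_⟩
  -- split the sum up to `n + q` after `n` and after `q`; periodicity turns the second
  -- split into a rotated copy of the sum up to `n`
  have key : (1 - exp (I * q * c)) * twistedSum c u 0 n
      = twistedSum c u 0 q - exp (I * n * c) * twistedSum c u n q := by
    have h₁ := twistedSum_add c u 0 n q
    have h₂ := twistedSum_add c u 0 q n
    rw [zero_add] at h₁ h₂
    rw [add_comm q n, (hu.twistedSum c n).eq] at h₂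
    linear_combination h₂ - h₁
  rw [le_div_iff₀ hz, mul_comm, ← norm_mul, key]
  calc _ ≤ ‖twistedSum c u 0 q‖ + ‖exp (I * n * c) * twistedSum c u n q‖ := norm_sub_le _ _
    _ ≤ _ := by rw [norm_mul, norm_cexp_I_mul_natCast_mul, one_mul]; gcongr; exact hC n

theorem limsup_le_zero_of_forall_pos_eventually_le {α : Type*} {l : Filter α} {u : α → ℝ}
    (h : ∀ ε > 0, ∀ᶠ a in l, u a ≤ ε) : limsup u l ≤ 0 := by
  by_cases hb : IsCoboundedUnder (· ≤ ·) l u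
  · refine le_of_forall_pos_le_add fun ε hε => ?_
    rw [zero_add]
    exact limsup_le_of_le hb (h ε hε)
  · -- junk value: an unbounded-below set of eventual upper bounds has `sInf = 0` in `ℝ`
    exact (Real.sInf_of_not_bddBelow hb).le

theorem limsup_log_div_log_le_zero {u : ℕ → ℝ} {B : ℝ} (hB : ∀ n, |u n| ≤ B) :
    limsup (fun n : ℕ => Real.log (u n) / Real.log n) atTop ≤ 0 := by
  set B' := max B 1
  have hlog : ∀ n, Real.log (u n) ≤ Real.log B' := fun n => by
    rw [← Real.log_abs]
    rcases (abs_nonneg (u n)).eq_or_lt with h | h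
    · rw [← h, Real.log_zero]
      exact Real.log_nonneg (le_max_right _ _)
    · exact Real.log_le_log h ((hB n).trans (le_max_left _ _))
  have hlim : Tendsto (fun n : ℕ => Real.log B' / Real.log n) atTop (𝓝 0) :=
    tendsto_const_nhds.div_atTop (Real.tendsto_log_atTop.comp tendsto_natCast_atTop_atTop)
  refine limsup_le_zero_of_forall_pos_eventually_le fun ε hε => ?_
  filter_upwards [eventually_ge_atTop 2, hlim.eventually_lt_const hε] with n hn hε'
  have hn' : 0 < Real.log n := Real.log_pos (by exact_mod_cast hn)
  exact (div_le_div_of_nonneg_right (hlog n) hn'.le).trans hε'.le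

/-- for a periodic point `x` of period `q` and `c` with `e^{iqc} ≠ 1`:
(i) `p_c(n)` is bounded; (ii) for each `n ≥ 1` the time-averaged mean-square displacement
exists and equals `(1/q) ∑_{j=0}^{q-1} |∑_{l=0}^{n-1} e^{ilc} v(f^{j+l}x)|²`;
(iii) `sup_n M_c(n) < ∞`, hence `limsup log M_c(n)/log n ≤ 0`. -/
theorem stmt3 {X : Type*} (f : X → X) (x : X) (q : ℕ) (hq : 1 ≤ q) (hx : f^[q] x = x)
    (v : X → ℝ) (c : ℝ) (hc : Complex.exp (Complex.I * q * c) ≠ 1)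
    (p : ℕ → ℂ)
    (hp : ∀ n, p n = ∑ j ∈ Finset.range n, Complex.exp (Complex.I * j * c) * v (f^[j] x))
    (M : ℕ → ℝ)
    (hM : ∀ n, M n = (1 / (q : ℝ)) * ∑ j ∈ Finset.range q,
      ‖∑ l ∈ Finset.range n,
        Complex.exp (Complex.I * l * c) * v (f^[j + l] x)‖ ^ 2) :
    (∃ B : ℝ, ∀ n, ‖p n‖ ≤ B) ∧
    (∀ n : ℕ, 1 ≤ n → Tendsto (fun N : ℕ => (1 / (N : ℝ)) * ∑ j ∈ Finset.Icc 1 N,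
        ‖p (j + n) - p j‖ ^ 2) atTop (𝓝 (M n))) ∧
    (∃ B : ℝ, ∀ n, M n ≤ B) ∧
    limsup (fun n : ℕ => Real.log (M n) / Real.log n) atTop ≤ 0 := by
  set u : ℕ → ℂ := fun j => v (f^[j] x)
  have hu : Periodic u q := fun j => by simp only [u, iterate_add_apply, hx]
  have hp' : ∀ n, p n = twistedSum c u 0 n := fun n => by simp [hp, twistedSum, u]
  have hM' : ∀ n, M n = (q : ℝ)⁻¹ * ∑ j ∈ range q, ‖twistedSum c u j n‖ ^ 2 := fun n => by
    simp [hM, twistedSum, u]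
  have hdisp : ∀ j n, ‖p (j + n) - p j‖ = ‖twistedSum c u j n‖ := fun j n => by
    rw [hp', hp', twistedSum_add, add_sub_cancel_left, norm_mul, norm_cexp_I_mul_natCast_mul,
      one_mul, zero_add]
  obtain ⟨B, hB⟩ := exists_norm_twistedSum_zero_le hu hc
  have hpB : ∀ n, ‖p n‖ ≤ B := fun n => hp' n ▸ hB n
  have hMB : ∀ n, M n ≤ (2 * B) ^ 2 := fun n => by
    have hq' : (q : ℝ) ≠ 0 := Nat.cast_ne_zero.2 (by omega)
    calc M n ≤ (q : ℝ)⁻¹ * ∑ _j ∈ range q, (2 * B) ^ 2 := by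
          rw [hM']
          gcongr with j
          rw [← hdisp]
          exact (norm_sub_le _ _).trans (by linarith [hpB (j + n), hpB j])
      _ = (2 * B) ^ 2 := by simp [hq']
  have hM0 : ∀ n, 0 ≤ M n := fun n => by rw [hM']; positivity
  refine ⟨⟨B, hpB⟩, fun n _ => ?_, ⟨_, hMB⟩,
    limsup_log_div_log_le_zero fun n => (abs_of_nonneg (hM0 n)).trans_le (hMB n)⟩
  simpa [hdisp, hM'] using
    ((hu.twistedSum c n).comp (‖·‖ ^ 2)).tendsto_average_Icc (by omega)
end

section
/- Let ρ : ℕ → ℝ satisfy ∑_{k=1}^∞ k|ρ(k)| < ∞. For c ∈ ℝ set S(c) = ∑_{k=−∞}^{∞} e^{ikc} ρ(|k|), S_0(c) = −∑_{k=−∞}^{∞} e^{ikc} |k| ρ(|k|), and D_c(n) = ∑_{k=−n}^{n} (n − |k|) e^{ikc} ρ(|k|). Then for all c and n ≥ 1, |D_c(n) − S(c)·n − S_0(c)| ≤ 2 ∑_{k=n+1}^{∞} (k − n)|ρ(k)|, and this bound tends to 0 as n → ∞; in particular D_c(n) = S(c)·n + O(1) uniformly in c, and S_0 is continuous on [0,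 2π]. -/
/-!
The series `∑ₖ (n - |k|) e^{ikc} ρ(|k|)` over all of `ℤ` converges absolutely to `S(c) n + S₀(c)`,
and `D_c(n)` is its part over `|k| ≤ n`. The error is therefore minus the tail over `|k| > n`, whose
terms have norm `(|k| - n) |ρ(|k|)|`; the two half-tails `k > n` and `k < -n` give the factor `2`.
Since this bound tends to `0`, it is bounded, which together with `‖S₀(c)‖ ≤ ∑ |k| |ρ(|k|)|` gives
the uniform `O(1)`; continuity of `S₀` is the Weierstrass M-test with the same majorant.
-/

open Filter Topology

/-- Modified mean-square displacement `D_c(n) = ∑_{k=-n}^n (n-|k|) e^{ikc} ρ(|k|)`. -/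
noncomputable def Dc (ρ : ℕ → ℝ) (c : ℝ) (n : ℕ) : ℂ :=
  ∑ k ∈ Finset.Icc (-(n : ℤ)) (n : ℤ),
    ((n : ℂ) - ((|k| : ℤ) : ℂ)) * Complex.exp (Complex.I * k * c) * (ρ k.natAbs : ℂ)

/-- Power spectrum `S(c) = ∑_{k∈ℤ} e^{ikc} ρ(|k|)`. -/
noncomputable def Sc (ρ : ℕ → ℝ) (c : ℝ) : ℂ :=
  ∑' k : ℤ, Complex.exp (Complex.I * k * c) * (ρ k.natAbs : ℂ)

/-- `S₀(c) = -∑_{k∈ℤ} e^{ikc} |k| ρ(|k|)`. -/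
noncomputable def S0c (ρ : ℕ → ℝ) (c : ℝ) : ℂ :=
  -∑' k : ℤ, Complex.exp (Complex.I * k * c) * ((|k| : ℤ) : ℂ) * (ρ k.natAbs : ℂ)

open Complex

theorem HasSum.int_natAbs {M : Type*} [AddCommGroup M] [TopologicalSpace M]
    [IsTopologicalAddGroup M] {f : ℕ → M} {a : M} (hf : HasSum f a) :
    HasSum (fun k : ℤ => f k.natAbs) (a + (a - f 0)) := by
  refine HasSum.of_nat_of_neg_add_one (by simpa using hf) ?_
  have hshift := (hasSum_nat_add_iff' 1).mpr hf
  simp only [Finset.range_one, Finset.sum_singleton] at hshift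
  convert hshift using 2 with m
  congr 1

theorem summable_abs_of_summable_natCast_mul_abs {f : ℕ → ℝ}
    (hf : Summable fun k : ℕ => (k : ℝ) * |f k|) : Summable fun k : ℕ => |f k| := by
  refine (summable_nat_add_iff 1).mp <| ((summable_nat_add_iff 1).mpr hf).of_nonneg_of_le
    (fun k => abs_nonneg _) fun k => ?_
  push_cast
  nlinarith [abs_nonneg (f (k + 1)), (k.cast_nonneg : (0 : ℝ) ≤ k)]

theorem norm_cexp_I_mul_intCast_mul_ofReal (k : ℤ) (c : ℝ) : ‖exp (I * k * c)‖ = 1 := by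
  rw [show I * k * c = ((k * c : ℝ) : ℂ) * I by push_cast; ring, norm_exp_ofReal_mul_I]

section Spectrum

variable (ρ : ℕ → ℝ)

noncomputable def dcSummand (c : ℝ) (n : ℕ) (k : ℤ) : ℂ :=
  ((n : ℂ) - ((|k| : ℤ) : ℂ)) * exp (I * k * c) * (ρ k.natAbs : ℂ)

theorem Dc_eq_sum_dcSummand (c : ℝ) (n : ℕ) :
    Dc ρ c n = ∑ k ∈ Finset.Icc (-(n : ℤ)) n, dcSummand ρ c n k :=
  rfl

theorem norm_cexp_mul_ofReal (c : ℝ) (k : ℤ) :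
    ‖exp (I * k * c) * (ρ k.natAbs : ℂ)‖ = |ρ k.natAbs| := by
  rw [norm_mul, norm_cexp_I_mul_intCast_mul_ofReal, one_mul, norm_real, Real.norm_eq_abs]

theorem norm_cexp_mul_abs_mul_ofReal (c : ℝ) (k : ℤ) :
    ‖exp (I * k * c) * ((|k| : ℤ) : ℂ) * (ρ k.natAbs : ℂ)‖ = k.natAbs * |ρ k.natAbs| := by
  rw [norm_mul, norm_mul, norm_cexp_I_mul_intCast_mul_ofReal, one_mul, Int.abs_eq_natAbs,
    Int.cast_natCast, norm_natCast, norm_real, Real.norm_eq_abs]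

theorem norm_dcSummand_of_lt (c : ℝ) {n : ℕ} {k : ℤ} (hk : n < k.natAbs) :
    ‖dcSummand ρ c n k‖ = ((k.natAbs - n : ℕ) : ℝ) * |ρ k.natAbs| := by
  have hcoeff : (n : ℂ) - ((|k| : ℤ) : ℂ) = -((k.natAbs - n : ℕ) : ℂ) := by
    rw [Int.abs_eq_natAbs, Int.cast_natCast, Nat.cast_sub hk.le]
    ring
  rw [dcSummand, mul_assoc, norm_mul, norm_cexp_mul_ofReal, hcoeff, norm_neg, norm_natCast]

variable {ρ}

theorem summable_cexp_mul_ofReal (hρ : Summable fun k : ℕ => |ρ k|) (c : ℝ) :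
    Summable fun k : ℤ => exp (I * k * c) * (ρ k.natAbs : ℂ) := by
  refine Summable.of_norm ?_
  simpa only [norm_cexp_mul_ofReal] using hρ.hasSum.int_natAbs.summable

theorem summable_natAbs_mul_abs (hsum : Summable fun k : ℕ => (k : ℝ) * |ρ k|) :
    Summable fun k : ℤ => (k.natAbs : ℝ) * |ρ k.natAbs| :=
  hsum.hasSum.int_natAbs.summable

theorem summable_cexp_mul_abs_mul_ofReal (hsum : Summable fun k : ℕ => (k : ℝ) * |ρ k|) (c : ℝ) :
    Summable fun k : ℤ => exp (I * k * c) * ((|k| : ℤ) : ℂ) * (ρ k.natAbs : ℂ) := by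
  refine Summable.of_norm ?_
  simpa only [norm_cexp_mul_abs_mul_ofReal] using summable_natAbs_mul_abs hsum

theorem hasSum_dcSummand (hsum : Summable fun k : ℕ => (k : ℝ) * |ρ k|) (c : ℝ) (n : ℕ) :
    HasSum (dcSummand ρ c n) (Sc ρ c * n + S0c ρ c) := by
  have hρ := summable_abs_of_summable_natCast_mul_abs hsum
  have h := ((summable_cexp_mul_ofReal hρ c).hasSum.mul_right (n : ℂ)).sub
    (summable_cexp_mul_abs_mul_ofReal hsum c).hasSum
  have hsummand : dcSummand ρ c n = fun k : ℤ =>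
      exp (I * k * c) * (ρ k.natAbs : ℂ) * n - exp (I * k * c) * ((|k| : ℤ) : ℂ) * ρ k.natAbs :=
    funext fun k => by rw [dcSummand]; ring
  rwa [hsummand, Sc, S0c, ← sub_eq_add_neg]

theorem Dc_sub_eq_neg_tsum_compl (hsum : Summable fun k : ℕ => (k : ℝ) * |ρ k|) (c : ℝ)
    (n : ℕ) :
    Dc ρ c n - Sc ρ c * n - S0c ρ c =
      -∑' k : ↑(Finset.Icc (-(n : ℤ)) n : Set ℤ)ᶜ, dcSummand ρ c n k := by
  have h := (hasSum_dcSummand hsum c n).summable.sum_add_tsum_compl (s := Finset.Icc (-(n : ℤ)) n)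
  rw [(hasSum_dcSummand hsum c n).tsum_eq] at h
  rw [Dc_eq_sum_dcSummand]
  linear_combination h

theorem summable_natSub_mul_abs (hsum : Summable fun k : ℕ => (k : ℝ) * |ρ k|) (n : ℕ) :
    Summable fun m : ℕ => ((m - n : ℕ) : ℝ) * |ρ m| :=
  hsum.of_nonneg_of_le (fun m => by positivity) fun m =>
    mul_le_mul_of_nonneg_right (by exact_mod_cast m.sub_le n) (abs_nonneg _)

theorem tsum_natSub_mul_abs (hsum : Summable fun k : ℕ => (k : ℝ) * |ρ k|) (n : ℕ) :
    ∑' m : ℕ, ((m - n : ℕ) : ℝ) * |ρ m| = ∑' j : ℕ, ((j : ℝ) + 1) * |ρ (n + 1 + j)| := by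
  rw [← (summable_natSub_mul_abs hsum n).sum_add_tsum_nat_add (n + 1),
    Finset.sum_eq_zero fun m hm => by
      simp [Nat.sub_eq_zero_of_le (Finset.mem_range_succ_iff.mp hm)], zero_add]
  refine tsum_congr fun j => ?_
  rw [show j + (n + 1) - n = j + 1 by omega, add_comm n, add_assoc, add_comm 1]
  push_cast
  ring_nf

theorem norm_Dc_sub_le (hsum : Summable fun k : ℕ => (k : ℝ) * |ρ k|) (c : ℝ) (n : ℕ) :
    ‖Dc ρ c n - Sc ρ c * n - S0c ρ c‖ ≤ 2 * ∑' k : ℕ, ((k : ℝ) + 1) * |ρ (n + 1 + k)| := by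
  set s : Set ℤ := (Finset.Icc (-(n : ℤ)) n : Set ℤ)ᶜ
  -- truncated subtraction: `G` vanishes on `m ≤ n`, so `G |k|` bounds the whole tail `|k| > n`
  set G : ℕ → ℝ := fun m => ((m - n : ℕ) : ℝ) * |ρ m|
  have hG : HasSum (fun k : ℤ => G k.natAbs) (2 * ∑' m, G m) := by
    simpa [G, two_mul] using (summable_natSub_mul_abs hsum n).hasSum.int_natAbs
  have hnorm (k : s) : ‖dcSummand ρ c n k‖ = G (k : ℤ).natAbs := by
    have hk := k.2
    simp only [s, Finset.coe_Icc, Set.mem_compl_iff, Set.mem_Icc, not_and, not_le] at hk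
    exact norm_dcSummand_of_lt ρ c (by omega)
  calc ‖Dc ρ c n - Sc ρ c * n - S0c ρ c‖ = ‖∑' k : s, dcSummand ρ c n k‖ := by
        rw [Dc_sub_eq_neg_tsum_compl hsum, norm_neg]
    _ ≤ ∑' k : s, G (k : ℤ).natAbs :=
        tsum_of_norm_bounded (hG.summable.subtype s).hasSum (le_of_eq <| hnorm ·)
    _ ≤ ∑' k : ℤ, G k.natAbs := hG.summable.tsum_subtype_le _ s fun _ => by positivity
    _ = _ := by rw [hG.tsum_eq, tsum_natSub_mul_abs hsum]

theorem tendsto_tsum_succ_mul_abs_nat_add (hsum : Summable fun k : ℕ => (k : ℝ) * |ρ k|) :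
    Tendsto (fun n : ℕ => ∑' k : ℕ, ((k : ℝ) + 1) * |ρ (n + 1 + k)|) atTop (𝓝 0) := by
  have hle (n : ℕ) (k : ℕ) : ((k : ℝ) + 1) * |ρ (n + 1 + k)| ≤
      ((k + (n + 1) : ℕ) : ℝ) * |ρ (k + (n + 1))| := by
    rw [show n + 1 + k = k + (n + 1) by omega]
    exact mul_le_mul_of_nonneg_right (by push_cast; linarith [n.cast_nonneg (α := ℝ)])
      (abs_nonneg _)
  have hshift (n : ℕ) := (summable_nat_add_iff (n + 1)).mpr hsum
  refine squeeze_zero (fun n => tsum_nonneg fun k => by positivity)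
    (fun n => ((hshift n).of_nonneg_of_le (fun k => by positivity) (hle n)).tsum_le_tsum (hle n)
      (hshift n))
    ((tendsto_sum_nat_add fun k : ℕ => (k : ℝ) * |ρ k|).comp (tendsto_add_atTop_nat 1))

theorem norm_S0c_le (hsum : Summable fun k : ℕ => (k : ℝ) * |ρ k|) (c : ℝ) :
    ‖S0c ρ c‖ ≤ ∑' k : ℤ, (k.natAbs : ℝ) * |ρ k.natAbs| := by
  rw [S0c, norm_neg]
  exact tsum_of_norm_bounded (summable_natAbs_mul_abs hsum).hasSum
    fun k => (norm_cexp_mul_abs_mul_ofReal ρ c k).le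

theorem continuous_S0c (hsum : Summable fun k : ℕ => (k : ℝ) * |ρ k|) : Continuous (S0c ρ) := by
  refine (continuous_tsum (fun k => ?_) (summable_natAbs_mul_abs hsum)
    fun k c => (norm_cexp_mul_abs_mul_ofReal ρ c k).le).neg
  fun_prop

end Spectrum

/-- if `∑ k|ρ(k)| < ∞` then for all `c` and `n ≥ 1`,
`|D_c(n) - S(c)n - S₀(c)| ≤ 2 ∑_{k>n} (k-n)|ρ(k)|`; this bound tends to `0`;
in particular `D_c(n) = S(c)n + O(1)` uniformly in `c`, and `S₀` is continuous
on `[0, 2π]`. -/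
theorem stmt10 (ρ : ℕ → ℝ) (hsum : Summable fun k : ℕ => (k : ℝ) * |ρ k|) :
    (∀ (c : ℝ) (n : ℕ), 1 ≤ n →
      ‖Dc ρ c n - Sc ρ c * n - S0c ρ c‖ ≤
        2 * ∑' k : ℕ, ((k : ℝ) + 1) * |ρ (n + 1 + k)|) ∧
    Tendsto (fun n : ℕ => 2 * ∑' k : ℕ, ((k : ℝ) + 1) * |ρ (n + 1 + k)|) atTop (𝓝 0) ∧
    (∃ B : ℝ, ∀ (c : ℝ) (n : ℕ), 1 ≤ n →
      ‖Dc ρ c n - Sc ρ c * n‖ ≤ B) ∧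
    ContinuousOn (S0c ρ) (Set.Icc 0 (2 * Real.pi)) := by
  have htail : Tendsto (fun n : ℕ => 2 * ∑' k : ℕ, ((k : ℝ) + 1) * |ρ (n + 1 + k)|)
      atTop (𝓝 0) := by
    simpa using (tendsto_tsum_succ_mul_abs_nat_add hsum).const_mul 2
  obtain ⟨M, hM⟩ := htail.bddAbove_range
  refine ⟨fun c n _ => norm_Dc_sub_le hsum c n, htail,
    ⟨M + ∑' k : ℤ, (k.natAbs : ℝ) * |ρ k.natAbs|, fun c n _ => ?_⟩,
    (continuous_S0c hsum).continuousOn⟩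
  calc ‖Dc ρ c n - Sc ρ c * n‖ = ‖(Dc ρ c n - Sc ρ c * n - S0c ρ c) + S0c ρ c‖ := by
        rw [sub_add_cancel]
    _ ≤ ‖Dc ρ c n - Sc ρ c * n - S0c ρ c‖ + ‖S0c ρ c‖ := norm_add_le _ _
    _ ≤ M + ∑' k : ℤ, (k.natAbs : ℝ) * |ρ k.natAbs| :=
        add_le_add ((norm_Dc_sub_le hsum c n).trans (hM ⟨n, rfl⟩)) (norm_S0c_le hsum c)
end

section
/- Let ρ : ℕ → ℝ and suppose |ρ(k)| ≤ C k^{−d} for all k ≥ 1, where C > 0 and 1 < d < 2. Then for every c ∈ ℝ and n ≥ 1, |D_c(n) − S(c)·n| ≤ 2C n^{2−d} / ((d−1)(2−d)), where D_c(n) = ∑_{k=−n}^{n} (n − |k|) e^{ikc} ρ(|k|) and S(c) = ∑_{k=−∞}^{∞} e^{ikc} ρ(|k|). -/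
/-!
Since the Fejér weights `(n - |k|)⁺` differ from the constant `n` by `min(|k|, n)`,
`D_c(n) - n S(c) = -∑_k min(|k|, n) e^{ikc} ρ(|k|)`. With the decay bound, its norm is at most
`2C ∑_{j ≥ 1} min(j, n) j^{-d}`. Splitting at `n` and comparing with integrals,
`∑_{j ≤ n} j^{1-d} ≤ n^{2-d}/(2-d)` and `n ∑_{j > n} j^{-d} ≤ n^{2-d}/(d-1)`, and
`1/(2-d) + 1/(d-1) = 1/((d-1)(2-d))`.
-/
open Filter Topology

theorem HasSum.comp_natAbs {M : Type*} [AddCommMonoid M] [TopologicalSpace M] [ContinuousAdd M]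
    {b : ℕ → M} {a : M} (h : HasSum (fun j => b (j + 1)) a) :
    HasSum (fun k : ℤ => b k.natAbs) (a + b 0 + a) :=
  HasSum.of_add_one_of_neg_add_one (f := fun k : ℤ => b k.natAbs) (by convert h using 3; omega)
    (by convert h using 3; omega)

theorem sum_Icc_fejer_sub_tsum_mul {R : Type*} [CommRing R] [TopologicalSpace R]
    [IsTopologicalRing R] [T2Space R] {F : ℤ → R} (hF : Summable F) (n : ℕ) :
    ∑ k ∈ Finset.Icc (-(n : ℤ)) n, ((n : R) - ((|k| : ℤ) : R)) * F k - (∑' k, F k) * n =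
      -∑' k, ((min |k| (n : ℤ) : ℤ) : R) * F k := by
  set w : ℤ → R := fun k => ((min |k| (n : ℤ) : ℤ) : R)
  have hsupp : ∀ k ∉ Finset.Icc (-(n : ℤ)) n, ((n : R) - w k) * F k = 0 := by
    intro k hk
    rw [Finset.mem_Icc, ← abs_le, not_le] at hk
    simp [w, min_eq_right hk.le]
  have hfin : ∑' k, ((n : R) - w k) * F k =
      ∑ k ∈ Finset.Icc (-(n : ℤ)) n, ((n : R) - ((|k| : ℤ) : R)) * F k := by
    rw [tsum_eq_sum hsupp]
    refine Finset.sum_congr rfl fun k hk => ?_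
    simp only [w, min_eq_left (abs_le.2 (Finset.mem_Icc.1 hk))]
  have hsplit : ∑' k, w k * F k = ∑' k, (n : R) * F k - ∑' k, ((n : R) - w k) * F k := by
    rw [← (hF.mul_left _).tsum_sub (summable_of_ne_finset_zero hsupp)]
    congr 1 with k
    ring
  rw [hsplit, hfin, hF.tsum_mul_left, mul_comm]
  ring

open Finset Set in
theorem sum_range_add_one_rpow_le {r : ℝ} (hr₀ : -1 < r) (hr₁ : r ≤ 0) (n : ℕ) :
    ∑ i ∈ range n, ((i + 1 : ℕ) : ℝ) ^ r ≤ (n : ℝ) ^ (r + 1) / (r + 1) := by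
  have hr : 0 < r + 1 := by linarith
  rcases n with _ | m
  · simp [Real.zero_rpow hr.ne']
  -- The term `i = 0` is split off: `0 ^ r = 0` for `r ≠ 0`, so `x ^ r` is not antitone
  -- on `[0, n]`.
  have hanti : AntitoneOn (fun x : ℝ => x ^ r) (Icc 1 (1 + m)) := fun x hx y _ hxy =>
    Real.rpow_le_rpow_of_nonpos (zero_lt_one.trans_le hx.1) hxy hr₁
  have hint := hanti.sum_le_integral
  rw [integral_rpow (Or.inl hr₀), Real.one_rpow] at hint
  have h1 : 1 ≤ 1 / (r + 1) := by rw [le_div_iff₀ hr]; linarith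
  rw [sum_range_succ', add_comm]
  push_cast at hint ⊢
  calc (1 : ℝ) ^ r + ∑ i ∈ range m, ((i : ℝ) + 1 + 1) ^ r
      ≤ 1 + ((1 + m) ^ (r + 1) - 1) / (r + 1) := by
        rw [Real.one_rpow]; gcongr
        exact (Finset.sum_congr rfl fun i _ => by ring_nf).trans_le hint
    _ ≤ ((m : ℝ) + 1) ^ (r + 1) / (r + 1) := by
        rw [add_comm 1 (m : ℝ), sub_div]; linarith

open Set MeasureTheory in
theorem tsum_add_add_one_rpow_neg_le {s : ℝ} (hs : 1 < s) {n : ℕ} (hn : 0 < n) :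
    ∑' i : ℕ, ((i + n + 1 : ℕ) : ℝ) ^ (-s) ≤ (n : ℝ) ^ (1 - s) / (s - 1) := by
  have hn' : (0 : ℝ) < n := by exact_mod_cast hn
  have hanti : AntitoneOn (fun x : ℝ => x ^ (-s)) (Ici n) := fun x hx y _ hxy =>
    Real.rpow_le_rpow_of_nonpos (hn'.trans_le hx) hxy (by linarith)
  calc ∑' i : ℕ, ((i + n + 1 : ℕ) : ℝ) ^ (-s)
      ≤ ∫ x in Ioi (n : ℝ), x ^ (-s) :=
        hanti.tsum_comp_add_le_integral n (integrableOn_Ioi_rpow_of_lt (by linarith) hn')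
          fun x hx => Real.rpow_nonneg (hn'.trans hx).le _
    _ = (n : ℝ) ^ (1 - s) / (s - 1) := by
        rw [integral_Ioi_rpow_of_lt (by linarith) hn', show -s + 1 = 1 - s by ring, neg_div,
          ← div_neg, neg_sub]

theorem summable_nat_add_one_rpow_neg {s : ℝ} (hs : 1 < s) :
    Summable fun j : ℕ => ((j + 1 : ℕ) : ℝ) ^ (-s) :=
  (summable_nat_add_iff 1).2 (Real.summable_nat_rpow.2 (by linarith))

theorem summable_min_mul_rpow_neg {d : ℝ} (hd : 1 < d) (n : ℕ) :
    Summable fun j : ℕ => ((min (j + 1) n : ℕ) : ℝ) * ((j + 1 : ℕ) : ℝ) ^ (-d) :=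
  ((summable_nat_add_one_rpow_neg hd).mul_left (n : ℝ)).of_nonneg_of_le
    (fun _ => by positivity) fun j => by gcongr; exact_mod_cast min_le_right _ _

theorem tsum_min_mul_rpow_neg_le {d : ℝ} (hd₁ : 1 < d) (hd₂ : d < 2) {n : ℕ} (hn : 0 < n) :
    ∑' j : ℕ, ((min (j + 1) n : ℕ) : ℝ) * ((j + 1 : ℕ) : ℝ) ^ (-d) ≤
      (n : ℝ) ^ (2 - d) / ((d - 1) * (2 - d)) := by
  have hn' : (0 : ℝ) < n := by exact_mod_cast hn
  have hhead : ∀ i ∈ Finset.range n,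
      ((min (i + 1) n : ℕ) : ℝ) * ((i + 1 : ℕ) : ℝ) ^ (-d) =
        ((i + 1 : ℕ) : ℝ) ^ (1 - d) := by
    intro i hi
    rw [min_eq_left (Finset.mem_range.1 hi), sub_eq_add_neg, Real.rpow_add (by positivity),
      Real.rpow_one]
  have htail : ∀ i : ℕ,
      ((min (i + n + 1) n : ℕ) : ℝ) * ((i + n + 1 : ℕ) : ℝ) ^ (-d) =
        n * ((i + n + 1 : ℕ) : ℝ) ^ (-d) := by
    intro i
    rw [min_eq_right (by omega)]
  rw [← (summable_min_mul_rpow_neg hd₁ n).sum_add_tsum_nat_add n, Finset.sum_congr rfl hhead]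
  simp_rw [htail, tsum_mul_left]
  have hpow : (n : ℝ) * n ^ (1 - d) = n ^ (2 - d) := by
    rw [← Real.rpow_one_add' hn'.le (by linarith)]; ring_nf
  calc ∑ i ∈ Finset.range n, ((i + 1 : ℕ) : ℝ) ^ (1 - d) +
        n * ∑' i : ℕ, ((i + n + 1 : ℕ) : ℝ) ^ (-d)
      ≤ (n : ℝ) ^ (1 - d + 1) / (1 - d + 1) + n * ((n : ℝ) ^ (1 - d) / (d - 1)) := by
        gcongr
        · exact sum_range_add_one_rpow_le (by linarith) (by linarith) n
        · exact tsum_add_add_one_rpow_neg_le hd₁ hn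
    _ = (n : ℝ) ^ (2 - d) / ((d - 1) * (2 - d)) := by
        rw [show 1 - d + 1 = 2 - d by ring, ← mul_div_assoc, hpow]
        field_simp [show d - 1 ≠ 0 by linarith, show 2 - d ≠ 0 by linarith]
        ring

theorem summable_abs_of_abs_le_rpow_neg {ρ : ℕ → ℝ} {C d : ℝ} (hd : 1 < d)
    (hdecay : ∀ k : ℕ, 1 ≤ k → |ρ k| ≤ C * (k : ℝ) ^ (-d)) :
    Summable fun j => |ρ (j + 1)| :=
  ((summable_nat_add_one_rpow_neg hd).mul_left C).of_nonneg_of_le (fun _ => abs_nonneg _)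
    fun j => hdecay (j + 1) (by omega)

theorem mul_abs_le_of_abs_le_rpow_neg {ρ : ℕ → ℝ} {C d : ℝ}
    (hdecay : ∀ k : ℕ, 1 ≤ k → |ρ k| ≤ C * (k : ℝ) ^ (-d)) {j m : ℕ} (hm : m ≤ j) :
    (m : ℝ) * |ρ j| ≤ C * (m * (j : ℝ) ^ (-d)) := by
  rcases Nat.eq_zero_or_pos j with rfl | hj
  · simp [Nat.le_zero.1 hm]
  · calc (m : ℝ) * |ρ j| ≤ m * (C * (j : ℝ) ^ (-d)) := by gcongr; exact hdecay j hj
      _ = C * (m * (j : ℝ) ^ (-d)) := by ring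

theorem stmt11_general (ρ : ℕ → ℝ) (C d : ℝ) (hd1 : 1 < d) (hd2 : d < 2)
    (hdecay : ∀ k : ℕ, 1 ≤ k → |ρ k| ≤ C * (k : ℝ) ^ (-d)) :
    ∀ (c : ℝ) (n : ℕ), 1 ≤ n →
      ‖Dc ρ c n - Sc ρ c * n‖ ≤
        2 * C * (n : ℝ) ^ (2 - d) / ((d - 1) * (2 - d)) := by
  intro c n hn
  set F : ℤ → ℂ := fun k => Complex.exp (Complex.I * k * c) * (ρ k.natAbs : ℂ)
  have hC : 0 ≤ C := (abs_nonneg _).trans (by simpa using hdecay 1 le_rfl)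
  have hnormF : ∀ k, ‖F k‖ = |ρ k.natAbs| := fun k => by simp [F, Complex.norm_exp]
  have hF : Summable F := by
    refine Summable.of_norm (.congr ?_ fun k => (hnormF k).symm)
    exact ((summable_abs_of_abs_le_rpow_neg hd1 hdecay).hasSum.comp_natAbs
      (b := fun j => |ρ j|)).summable
  have hDc : Dc ρ c n - Sc ρ c * n = -∑' k, ((min |k| (n : ℤ) : ℤ) : ℂ) * F k := by
    rw [Dc, Sc, ← sum_Icc_fejer_sub_tsum_mul hF n]
    simp only [F, mul_assoc]
  set b : ℕ → ℝ := fun j => C * (((min j n : ℕ) : ℝ) * (j : ℝ) ^ (-d))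
  have hterm (k : ℤ) : ‖((min |k| (n : ℤ) : ℤ) : ℂ) * F k‖ ≤ b k.natAbs := by
    rw [norm_mul, hnormF, Int.abs_eq_natAbs, ← Nat.cast_min, Int.cast_natCast,
      Complex.norm_natCast]
    exact mul_abs_le_of_abs_le_rpow_neg hdecay (min_le_left _ _)
  have hb := ((summable_min_mul_rpow_neg hd1 n).mul_left C).hasSum
  rw [hDc, norm_neg]
  calc _ ≤ _ := tsum_of_norm_bounded (hb.comp_natAbs (b := b)) hterm
    _ = 2 * C * ∑' j : ℕ, ((min (j + 1) n : ℕ) : ℝ) * ((j + 1 : ℕ) : ℝ) ^ (-d) := by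
        simp only [b, Nat.zero_min, CharP.cast_eq_zero, zero_mul, mul_zero, add_zero,
          tsum_mul_left]
        ring
    _ ≤ 2 * C * ((n : ℝ) ^ (2 - d) / ((d - 1) * (2 - d))) := by
        gcongr; exact tsum_min_mul_rpow_neg_le hd1 hd2 hn
    _ = 2 * C * (n : ℝ) ^ (2 - d) / ((d - 1) * (2 - d)) := by ring

/-- if `|ρ(k)| ≤ C k^{-d}` with `C > 0` and `1 < d < 2`, then for every
`c` and `n ≥ 1`, `|D_c(n) - S(c)n| ≤ 2C n^{2-d}/((d-1)(2-d))`. -/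
theorem stmt11 (ρ : ℕ → ℝ) (C d : ℝ) (hC : 0 < C) (hd1 : 1 < d) (hd2 : d < 2)
    (hdecay : ∀ k : ℕ, 1 ≤ k → |ρ k| ≤ C * (k : ℝ) ^ (-d)) :
    ∀ (c : ℝ) (n : ℕ), 1 ≤ n →
      ‖Dc ρ c n - Sc ρ c * n‖ ≤
        2 * C * (n : ℝ) ^ (2 - d) / ((d - 1) * (2 - d)) :=
  stmt11_general ρ C d hd1 hd2 hdecay
end

section
/- Let a > 0 and let D : ℕ → ℝ satisfy D(n) = a·n + e(n) where e(n)/n → 0 as n → ∞. For each n ≥ 2 let ξ = (1, 2, …, n) and Δ = (D(1), …, D(n)), with empirical covariance cov(x, y) = (1/n)∑_{j=1}^n (x(j) − x̄)(y(j) − ȳ), variance var(x) = cov(x, x), and correlation corr(ξ, Δ) = cov(ξ, Δ)/√(var(ξ)·var(Δ)). Then var(Δ) > 0 for all sufficiently large n, and corr(ξ, Δ) → 1 as n → ∞. (Thus if D_c(n) = a n + o(n) with a > 0, the correlation-method value of K_c equals 1.) -/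
open Filter Topology

/-! Writing `Δ = a ξ + e` with `e(j) = o(j)`, the variance of `e` is `o(n²)` by Cesàro averaging,
while `var ξ = (n² - 1)/12`. By Cauchy–Schwarz `cov(ξ, e) = o(n²)` as well, so after dividing by
`n²` one has `cov(ξ, Δ) → a/12` and `var Δ → a²/12`, and the correlation tends to
`(a/12) / √(1/12 · a²/12) = 1`. -/

/-- Empirical covariance of two vectors of length `n`:
`cov(x,y) = (1/n) ∑_j (x j - x̄)(y j - ȳ)`. -/
noncomputable def ecov (n : ℕ) (x y : Fin n → ℝ) : ℝ :=
  (1 / (n : ℝ)) * ∑ j, (x j - (1 / (n : ℝ)) * ∑ i, x i) * (y j - (1 / (n : ℝ)) * ∑ i, y i)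

noncomputable def ecorr (n : ℕ) (x y : Fin n → ℝ) : ℝ :=
  ecov n x y / Real.sqrt (ecov n x x * ecov n y y)

section ecov

variable {n : ℕ}

lemma ecov_comm (x y : Fin n → ℝ) : ecov n x y = ecov n y x := by
  simp only [ecov, mul_comm (x _ - _)]

lemma ecov_const_mul_add_right (x y z : Fin n → ℝ) (b : ℝ) :
    ecov n x (fun j => b * y j + z j) = b * ecov n x y + ecov n x z := by
  have hmean : 1 / (n : ℝ) * ∑ i, (b * y i + z i)
      = b * (1 / (n : ℝ) * ∑ i, y i) + 1 / (n : ℝ) * ∑ i, z i := by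
    rw [Finset.sum_add_distrib, ← Finset.mul_sum]; ring
  have hsum : ∑ j, (x j - 1 / (n : ℝ) * ∑ i, x i) *
        (b * y j + z j - (b * (1 / (n : ℝ) * ∑ i, y i) + 1 / (n : ℝ) * ∑ i, z i))
      = b * ∑ j, (x j - 1 / (n : ℝ) * ∑ i, x i) * (y j - 1 / (n : ℝ) * ∑ i, y i)
        + ∑ j, (x j - 1 / (n : ℝ) * ∑ i, x i) * (z j - 1 / (n : ℝ) * ∑ i, z i) := by
    rw [Finset.mul_sum _ _ b, ← Finset.sum_add_distrib]
    exact Finset.sum_congr rfl fun j _ => by ring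
  simp only [ecov, hmean, hsum]
  ring

lemma ecov_const_mul_add_left (x y z : Fin n → ℝ) (b : ℝ) :
    ecov n (fun j => b * x j + y j) z = b * ecov n x z + ecov n y z := by
  rw [ecov_comm, ecov_const_mul_add_right, ecov_comm z, ecov_comm z]

lemma ecov_self_nonneg (x : Fin n → ℝ) : 0 ≤ ecov n x x :=
  mul_nonneg (by positivity) (Finset.sum_nonneg fun _ _ => mul_self_nonneg _)

lemma ecov_sq_le_mul (x y : Fin n → ℝ) : ecov n x y ^ 2 ≤ ecov n x x * ecov n y y := by
  have h := Finset.sum_mul_sq_le_sq_mul_sq Finset.univ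
    (fun j => x j - 1 / (n : ℝ) * ∑ i, x i) (fun j => y j - 1 / (n : ℝ) * ∑ i, y i)
  simp only [ecov, ← sq]
  nlinarith [mul_le_mul_of_nonneg_left h (sq_nonneg (1 / (n : ℝ)))]

lemma ecov_eq_mean_mul_sub (x y : Fin n → ℝ) :
    ecov n x y = 1 / (n : ℝ) * ∑ j, x j * y j
      - (1 / (n : ℝ) * ∑ i, x i) * (1 / (n : ℝ) * ∑ i, y i) := by
  rcases eq_or_ne n 0 with rfl | hn
  · simp [ecov]
  · simp only [ecov, sub_mul, mul_sub, Finset.sum_sub_distrib, ← Finset.sum_mul,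
      ← Finset.mul_sum, Finset.sum_const, Finset.card_univ, Fintype.card_fin, nsmul_eq_mul]
    field_simp
    ring

lemma ecov_self_le_mean_sq (x : Fin n → ℝ) : ecov n x x ≤ 1 / (n : ℝ) * ∑ j, x j ^ 2 := by
  rw [ecov_eq_mean_mul_sub]
  simp only [← sq]
  exact sub_le_self _ (sq_nonneg _)

end ecov

lemma sum_natCast_add_one (n : ℕ) : ∑ j : Fin n, ((j : ℝ) + 1) = (n : ℝ) * (n + 1) / 2 := by
  rw [Fin.sum_univ_eq_sum_range (fun i => (i : ℝ) + 1)]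
  induction n with
  | zero => simp
  | succ m ih => rw [Finset.sum_range_succ, ih]; push_cast; ring

lemma sum_natCast_add_one_sq (n : ℕ) :
    ∑ j : Fin n, ((j : ℝ) + 1) ^ 2 = (n : ℝ) * (n + 1) * (2 * n + 1) / 6 := by
  rw [Fin.sum_univ_eq_sum_range (fun i => ((i : ℝ) + 1) ^ 2)]
  induction n with
  | zero => simp
  | succ m ih => rw [Finset.sum_range_succ, ih]; push_cast; ring

lemma ecov_self_natCast_add_one {n : ℕ} (hn : n ≠ 0) :
    ecov n (fun j => (j : ℝ) + 1) (fun j => (j : ℝ) + 1) = ((n : ℝ) ^ 2 - 1) / 12 := by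
  rw [ecov_eq_mean_mul_sub]
  simp only [← sq, sum_natCast_add_one_sq, sum_natCast_add_one]
  field_simp
  ring

lemma tendsto_ecov_self_natCast_add_one_div_sq :
    Tendsto (fun n : ℕ => ecov n (fun j => (j : ℝ) + 1) (fun j => (j : ℝ) + 1) / (n : ℝ) ^ 2)
      atTop (𝓝 (1 / 12)) := by
  have h : Tendsto (fun n : ℕ => 1 / 12 - 1 / 12 * ((n : ℝ)⁻¹) ^ 2) atTop (𝓝 (1 / 12)) := by
    simpa using ((tendsto_inv_atTop_nhds_zero_nat (𝕜 := ℝ)).pow 2).const_mul (1 / 12 : ℝ)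
      |>.const_sub (1 / 12 : ℝ)
  refine h.congr' ?_
  filter_upwards [eventually_ne_atTop 0] with n hn
  rw [ecov_self_natCast_add_one hn]
  field_simp

lemma ecov_self_div_sq_le_cesaro (f : ℕ → ℝ) (n : ℕ) :
    ecov n (fun j => f (j + 1)) (fun j => f (j + 1)) / (n : ℝ) ^ 2
      ≤ (n : ℝ)⁻¹ * ∑ i ∈ Finset.range n, (f (i + 1) / (i + 1 : ℕ)) ^ 2 := by
  have hterm : ∀ j : Fin n, f (j + 1) ^ 2 ≤ (f (j + 1) / (j + 1 : ℕ)) ^ 2 * (n : ℝ) ^ 2 := by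
    intro j
    have hj : ((j + 1 : ℕ) : ℝ) ≤ n := by exact_mod_cast j.isLt
    calc f (j + 1) ^ 2 = (f (j + 1) / (j + 1 : ℕ)) ^ 2 * ((j + 1 : ℕ) : ℝ) ^ 2 := by
          field_simp
      _ ≤ _ := by gcongr
  calc _ ≤ 1 / (n : ℝ) * ∑ j : Fin n, f (j + 1) ^ 2 / (n : ℝ) ^ 2 := by
        rw [← Finset.sum_div, ← mul_div_assoc]
        gcongr
        exact ecov_self_le_mean_sq _
    _ ≤ 1 / (n : ℝ) * ∑ j : Fin n, (f (j + 1) / (j + 1 : ℕ)) ^ 2 := by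
        gcongr with j
        exact div_le_of_le_mul₀ (by positivity) (by positivity) (hterm j)
    _ = _ := by
        rw [one_div, Fin.sum_univ_eq_sum_range (fun i => (f (i + 1) / (i + 1 : ℕ)) ^ 2)]

lemma tendsto_ecov_self_div_sq_zero {f : ℕ → ℝ}
    (hf : Tendsto (fun k : ℕ => f k / k) atTop (𝓝 0)) :
    Tendsto (fun n : ℕ => ecov n (fun j => f (j + 1)) (fun j => f (j + 1)) / (n : ℝ) ^ 2)
      atTop (𝓝 0) := by
  have hsq : Tendsto (fun i : ℕ => (f (i + 1) / (i + 1 : ℕ)) ^ 2) atTop (𝓝 0) := by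
    simpa using (hf.comp (tendsto_add_atTop_nat 1)).pow 2
  exact squeeze_zero (fun n => div_nonneg (ecov_self_nonneg _) (sq_nonneg _))
    (ecov_self_div_sq_le_cesaro f) hsq.cesaro

lemma ecorr_eq_div_sqrt_div {n : ℕ} (x y : Fin n → ℝ) {s : ℝ} (hs : 0 < s) :
    ecorr n x y = ecov n x y / s / Real.sqrt (ecov n x x / s * (ecov n y y / s)) := by
  rw [div_mul_div_comm, ← sq, Real.sqrt_div' _ (sq_nonneg s), Real.sqrt_sq hs.le,
    div_div_div_cancel_right₀ hs.ne', ecorr]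

section asymptotics

variable {x y e : (n : ℕ) → Fin n → ℝ} {s : ℕ → ℝ} {a c : ℝ}

lemma tendsto_ecov_div_zero (hx : Tendsto (fun n => ecov n (x n) (x n) / s n) atTop (𝓝 c))
    (he : Tendsto (fun n => ecov n (e n) (e n) / s n) atTop (𝓝 0)) :
    Tendsto (fun n => ecov n (x n) (e n) / s n) atTop (𝓝 0) := by
  have hbound := (hx.mul he).sqrt
  rw [mul_zero, Real.sqrt_zero] at hbound
  refine squeeze_zero_norm (fun n => Real.abs_le_sqrt ?_) hbound
  rw [div_pow, div_mul_div_comm, ← sq]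
  exact div_le_div_of_nonneg_right (ecov_sq_le_mul _ _) (sq_nonneg _)

lemma eventually_ecov_pos_and_tendsto_ecorr_one (ha : 0 < a) (hc : 0 < c)
    (hs : ∀ᶠ n in atTop, 0 < s n)
    (hx : Tendsto (fun n => ecov n (x n) (x n) / s n) atTop (𝓝 c))
    (he : Tendsto (fun n => ecov n (fun j => y n j - a * x n j) (fun j => y n j - a * x n j) /
      s n) atTop (𝓝 0)) :
    (∀ᶠ n in atTop, 0 < ecov n (y n) (y n)) ∧
      Tendsto (fun n => ecorr n (x n) (y n)) atTop (𝓝 1) := by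
  set e : (n : ℕ) → Fin n → ℝ := fun n j => y n j - a * x n j
  replace he : Tendsto (fun n => ecov n (e n) (e n) / s n) atTop (𝓝 0) := he
  have hy : ∀ n, y n = fun j => a * x n j + e n j := fun n => by
    funext j
    simp only [e]
    ring
  have hxe := tendsto_ecov_div_zero hx he
  have hcov : Tendsto (fun n => ecov n (x n) (y n) / s n) atTop (𝓝 (a * c)) := by
    have h := (hx.const_mul a).add hxe
    rw [add_zero] at h
    refine h.congr fun n => ?_
    rw [hy n, ecov_const_mul_add_right, add_div, mul_div_assoc]
  have hvar : Tendsto (fun n => ecov n (y n) (y n) / s n) atTop (𝓝 (a ^ 2 * c)) := by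
    have h := ((hx.const_mul (a ^ 2)).add (hxe.const_mul (2 * a))).add he
    rw [mul_zero, add_zero, add_zero] at h
    refine h.congr fun n => ?_
    rw [hy n, ecov_const_mul_add_left, ecov_const_mul_add_right, ecov_const_mul_add_right,
      ecov_comm (e n) (x n)]
    ring
  refine ⟨?_, ?_⟩
  · filter_upwards [hvar.eventually (eventually_gt_nhds (by positivity)), hs] with n hn hsn
    exact (div_pos_iff_of_pos_right hsn).1 hn
  · have hac : Real.sqrt (c * (a ^ 2 * c)) = a * c := by
      rw [show c * (a ^ 2 * c) = (a * c) ^ 2 by ring, Real.sqrt_sq (by positivity)]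
    have h := hcov.div (hx.mul hvar).sqrt (by rw [hac]; positivity)
    rw [hac, div_self (by positivity)] at h
    refine h.congr' ?_
    filter_upwards [hs] with n hsn
    exact (ecorr_eq_div_sqrt_div _ _ hsn).symm

end asymptotics

/-- if `D(n) = a·n + e(n)` with `a > 0` and `e(n) = o(n)`, then the empirical
variance of `Δ = (D(1),…,D(n))` is eventually positive, and the empirical correlation of
`ξ = (1,…,n)` with `Δ` tends to `1`: the correlation-method value of `K_c` is `1`. -/
theorem stmt16 (a : ℝ) (ha : 0 < a) (D : ℕ → ℝ)
    (he : Tendsto (fun n : ℕ => (D n - a * n) / n) atTop (𝓝 0)) :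
    (∀ᶠ n : ℕ in atTop, 0 < ecov n (fun j => D ((j : ℕ) + 1)) (fun j => D ((j : ℕ) + 1))) ∧
    Tendsto (fun n : ℕ =>
      ecov n (fun j => ((j : ℕ) : ℝ) + 1) (fun j => D ((j : ℕ) + 1)) /
        Real.sqrt (ecov n (fun j => ((j : ℕ) : ℝ) + 1) (fun j => ((j : ℕ) : ℝ) + 1) *
          ecov n (fun j => D ((j : ℕ) + 1)) (fun j => D ((j : ℕ) + 1))))
      atTop (𝓝 1) := by
  have herr := tendsto_ecov_self_div_sq_zero he
  push_cast at herr
  exact eventually_ecov_pos_and_tendsto_ecorr_one (x := fun n (j : Fin n) => (j : ℝ) + 1)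
    (y := fun n j => D (j + 1)) ha (by norm_num : (0 : ℝ) < 1 / 12)
    (eventually_gt_atTop 0 |>.mono fun n hn => by positivity)
    tendsto_ecov_self_natCast_add_one_div_sq herr
end
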